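/- arXiv:2303.05478 — 9 statements merged into one kernel-verified Lean document; each statement's English description precedes it below -/
import Mathlib

section
/- Let 0 ≤ c < 1/√5 be fixed, and let x, y ∈ (-1,1) have the same sign with |x| ≤ |y| and pseudo-hyperbolic distance ϱ(x,y) := |x-y|/|1-xy| ≤ c. Then 1/(1-y²) ≤ (1 - 2ϱ(x,y)/√(1-c²))⁻¹ · 1/(1-x²). -/
/-!
The identity `1 - ϱ(x, y)² = (1 - x²)(1 - y²) / (1 - xy)²` together with `ϱ ≤ c` and `|x| ≤ |y|`
gives `√(1 - c²) |1 - xy| ≤ 1 - x²`. Hence `2ϱ(1 - x²) / √(1 - c²) ≥ 2|x - y| ≥ y² - x²`, which is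
the claim `(1 - 2ϱ/√(1 - c²))(1 - x²) ≤ 1 - y²` after inversion; `c < 1/√5` makes the factor
`1 - 2ϱ/√(1 - c²)` positive, since then `2c < √(1 - c²)`.
-/

noncomputable def pseudoHyperbolicDist (x y : ℝ) : ℝ := |x - y| / |1 - x * y|

section

variable {x y c s : ℝ}

theorem pseudoHyperbolicDist_nonneg (x y : ℝ) : 0 ≤ pseudoHyperbolicDist x y :=
  div_nonneg (abs_nonneg _) (abs_nonneg _)

theorem one_sub_mul_ne_zero (hx : |x| ≤ 1) (hy : |y| < 1) : 1 - x * y ≠ 0 := by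
  have hlt : |x * y| < 1 := by
    rw [abs_mul]
    exact mul_lt_one_of_nonneg_of_lt_one_right hx (abs_nonneg y) hy
  intro h
  rw [← sub_eq_zero.mp h, abs_one] at hlt
  exact lt_irrefl 1 hlt

theorem one_sub_pseudoHyperbolicDist_sq (h : 1 - x * y ≠ 0) :
    1 - pseudoHyperbolicDist x y ^ 2 = (1 - x ^ 2) * (1 - y ^ 2) / (1 - x * y) ^ 2 := by
  rw [pseudoHyperbolicDist, div_pow, sq_abs, sq_abs]
  field_simp
  ring

theorem sqrt_one_sub_sq_mul_abs_le (hρ : pseudoHyperbolicDist x y ≤ c) (hxy : |x| ≤ |y|)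
    (hy : |y| < 1) : √(1 - c ^ 2) * |1 - x * y| ≤ 1 - x ^ 2 := by
  have hxy1 : 1 - x * y ≠ 0 := one_sub_mul_ne_zero (hxy.trans hy.le) hy
  have hx2 : x ^ 2 ≤ y ^ 2 := sq_le_sq.mpr hxy
  have hy2 : y ^ 2 < 1 := (sq_lt_one_iff_abs_lt_one y).mpr hy
  have hρc : pseudoHyperbolicDist x y ^ 2 ≤ c ^ 2 :=
    pow_le_pow_left₀ (pseudoHyperbolicDist_nonneg x y) hρ 2
  have key : (1 - c ^ 2) * (1 - x * y) ^ 2 ≤ (1 - x ^ 2) ^ 2 :=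
    calc (1 - c ^ 2) * (1 - x * y) ^ 2
        ≤ (1 - pseudoHyperbolicDist x y ^ 2) * (1 - x * y) ^ 2 := by gcongr
      _ = (1 - x ^ 2) * (1 - y ^ 2) := by
        rw [one_sub_pseudoHyperbolicDist_sq hxy1]
        field_simp
      _ ≤ (1 - x ^ 2) * (1 - x ^ 2) := by gcongr; linarith
      _ = (1 - x ^ 2) ^ 2 := (sq _).symm
  calc √(1 - c ^ 2) * |1 - x * y| = √((1 - c ^ 2) * (1 - x * y) ^ 2) := by
        rw [Real.sqrt_mul' _ (sq_nonneg _), Real.sqrt_sq_eq_abs]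
    _ ≤ √((1 - x ^ 2) ^ 2) := Real.sqrt_le_sqrt key
    _ = 1 - x ^ 2 := Real.sqrt_sq (by linarith)

theorem sq_sub_sq_le_two_mul_abs_sub (hx : |x| ≤ 1) (hy : |y| ≤ 1) :
    y ^ 2 - x ^ 2 ≤ 2 * |x - y| := by
  have hsum : |y + x| ≤ 2 := (abs_add_le y x).trans (by linarith)
  calc y ^ 2 - x ^ 2 = (y - x) * (y + x) := by ring
    _ ≤ |y - x| * |y + x| := (le_abs_self _).trans (abs_mul _ _).le
    _ ≤ |x - y| * 2 := by rw [abs_sub_comm]; gcongr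
    _ = 2 * |x - y| := mul_comm _ _

theorem two_mul_lt_sqrt_one_sub_sq (hc : c < 1 / √5) : 2 * c < √(1 - c ^ 2) := by
  rcases lt_or_ge c 0 with hneg | hnonneg
  · linarith [Real.sqrt_nonneg (1 - c ^ 2)]
  have h5 : c * √5 < 1 := (lt_div_iff₀ (by positivity)).mp hc
  have h5sq : √5 ^ 2 = 5 := Real.sq_sqrt (by norm_num)
  rw [Real.lt_sqrt (by positivity)]
  nlinarith [mul_nonneg hnonneg (Real.sqrt_nonneg 5)]

theorem one_sub_two_mul_pseudoHyperbolicDist_div_mul_le (hs : 0 < s)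
    (hsxy : s * |1 - x * y| ≤ 1 - x ^ 2) (hx : |x| ≤ 1) (hy : |y| < 1) :
    (1 - 2 * pseudoHyperbolicDist x y / s) * (1 - x ^ 2) ≤ 1 - y ^ 2 := by
  have hd : 0 < s * |1 - x * y| := mul_pos hs (abs_pos.mpr (one_sub_mul_ne_zero hx hy))
  have hρ : 2 * |x - y| ≤ 2 * pseudoHyperbolicDist x y / s * (1 - x ^ 2) := by
    have hrw : 2 * pseudoHyperbolicDist x y / s * (1 - x ^ 2)
        = 2 * |x - y| * ((1 - x ^ 2) / (s * |1 - x * y|)) := by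
      rw [pseudoHyperbolicDist]
      field_simp
    rw [hrw]
    exact le_mul_of_one_le_right (by positivity) ((one_le_div hd).mpr hsxy)
  linarith [sq_sub_sq_le_two_mul_abs_sub hx hy.le]

end

theorem stmt_1_general (c : ℝ) (hc' : c < 1/Real.sqrt 5)
    (x y : ℝ) (hx : x ∈ Set.Ioo (-1:ℝ) 1) (hy : y ∈ Set.Ioo (-1:ℝ) 1)
    (hxy : |x| ≤ |y|)
    (hρ : |x - y| / |1 - x*y| ≤ c) :
    1/(1 - y^2) ≤ (1 - 2*(|x - y| / |1 - x*y|)/Real.sqrt (1 - c^2))⁻¹ * (1/(1 - x^2)) := by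
  have hx1 : |x| < 1 := abs_lt.mpr hx
  have hy1 : |y| < 1 := abs_lt.mpr hy
  have hρs : 2 * pseudoHyperbolicDist x y < √(1 - c ^ 2) :=
    (mul_le_mul_of_nonneg_left hρ zero_le_two).trans_lt (two_mul_lt_sqrt_one_sub_sq hc')
  have hs : 0 < √(1 - c ^ 2) :=
    (mul_nonneg zero_le_two (pseudoHyperbolicDist_nonneg x y)).trans_lt hρs
  have hfactor : 0 < 1 - 2 * pseudoHyperbolicDist x y / √(1 - c ^ 2) :=
    sub_pos.mpr ((div_lt_one hs).mpr hρs)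
  have hx2 : 0 < 1 - x ^ 2 := sub_pos.mpr ((sq_lt_one_iff_abs_lt_one x).mpr hx1)
  have hmain := one_sub_two_mul_pseudoHyperbolicDist_div_mul_le hs
    (sqrt_one_sub_sq_mul_abs_le hρ hxy hy1) hx1.le hy1
  calc 1 / (1 - y ^ 2)
      ≤ 1 / ((1 - 2 * pseudoHyperbolicDist x y / √(1 - c ^ 2)) * (1 - x ^ 2)) :=
        one_div_le_one_div_of_le (mul_pos hfactor hx2) hmain
    _ = _ := by rw [one_div, mul_inv, one_div]; rfl

theorem stmt_1 (c : ℝ) (hc : 0 ≤ c) (hc' : c < 1/Real.sqrt 5)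
    (x y : ℝ) (hx : x ∈ Set.Ioo (-1:ℝ) 1) (hy : y ∈ Set.Ioo (-1:ℝ) 1)
    (hsign : 0 ≤ x * y) (hxy : |x| ≤ |y|)
    (hρ : |x - y| / |1 - x*y| ≤ c) :
    1/(1 - y^2) ≤ (1 - 2*(|x - y| / |1 - x*y|)/Real.sqrt (1 - c^2))⁻¹ * (1/(1 - x^2)) :=
  stmt_1_general c hc' x y hx hy hxy hρ
end

section
/- Let c ∈ [0, 1/√5) and let x, y ∈ (-1,1) have the same sign with ϱ(x,y) ≤ c, where ϱ(x,y) = |x-y|/|1-xy|. Then for all z₁, z₂ lying between x and y (inclusive), ϱ(z₁,z₂) ≤ ϱ(x,y)·(1 + C·ϱ(x,y)) for a constant C depending only on c. -/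
/-!
The pseudo-hyperbolic distance `ϱ(u, v) = |u - v| / |1 - u v|` on `(-1, 1)` is monotone along
intervals: for `a < b` the quantity `(b - a) / (1 - a b)` increases in `b` and decreases in `a`,
since `∂_b = (1 - a²) / (1 - a b)²` and `∂_a = -(1 - b²) / (1 - a b)²`. Hence any two points between
`x` and `y` are at most `ϱ(x, y)` apart, and the bound `ϱ(x, y) (1 + C ϱ(x, y))` holds with `C = 1`.
-/

noncomputable def pseudoHypDist (u v : ℝ) : ℝ := |u - v| / |1 - u * v|

theorem pseudoHypDist_comm (u v : ℝ) : pseudoHypDist u v = pseudoHypDist v u := by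
  rw [pseudoHypDist, pseudoHypDist, abs_sub_comm, mul_comm]

theorem pseudoHypDist_nonneg (u v : ℝ) : 0 ≤ pseudoHypDist u v :=
  div_nonneg (abs_nonneg _) (abs_nonneg _)

theorem pseudoHypDist_of_le {a b : ℝ} (ha : -1 < a) (hb : b < 1) (hab : a ≤ b) :
    pseudoHypDist a b = (b - a) / (1 - a * b) := by
  have hprod : 0 < 1 - a * b := by nlinarith
  rw [pseudoHypDist, abs_sub_comm, abs_of_nonneg (sub_nonneg.2 hab), abs_of_pos hprod]

theorem sub_div_one_sub_mul_le_of_le_right {a b b' : ℝ} (ha : -1 < a) (hab' : a ≤ b')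
    (hb'b : b' ≤ b) (hb : b < 1) :
    (b' - a) / (1 - a * b') ≤ (b - a) / (1 - a * b) := by
  rw [div_le_div_iff₀ (by nlinarith) (by nlinarith)]
  -- the cross difference factors as `(b - b') (1 - a²)`
  nlinarith [mul_nonneg (sub_nonneg.2 hb'b) (by nlinarith : (0 : ℝ) ≤ 1 - a * a)]

theorem sub_div_one_sub_mul_le_of_le_left {a a' b : ℝ} (ha : -1 < a) (haa' : a ≤ a')
    (ha'b : a' ≤ b) (hb : b < 1) :
    (b - a') / (1 - a' * b) ≤ (b - a) / (1 - a * b) := by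
  have h := sub_div_one_sub_mul_le_of_le_right (a := -b) (b := -a) (b' := -a')
    (by linarith) (by linarith) (by linarith) (by linarith)
  rwa [neg_sub_neg, neg_sub_neg, neg_mul_neg, neg_mul_neg, mul_comm b a', mul_comm b a] at h

theorem pseudoHypDist_le_of_le_of_le {a a' b' b : ℝ} (ha : -1 < a) (haa' : a ≤ a')
    (ha'b' : a' ≤ b') (hb'b : b' ≤ b) (hb : b < 1) :
    pseudoHypDist a' b' ≤ pseudoHypDist a b := by
  rw [pseudoHypDist_of_le (by linarith) (by linarith) ha'b',
    pseudoHypDist_of_le ha hb (by linarith)]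
  calc (b' - a') / (1 - a' * b') ≤ (b - a') / (1 - a' * b) :=
        sub_div_one_sub_mul_le_of_le_right (by linarith) ha'b' hb'b hb
    _ ≤ (b - a) / (1 - a * b) :=
        sub_div_one_sub_mul_le_of_le_left ha haa' (by linarith) hb

theorem pseudoHypDist_le_of_mem_uIcc {x y z₁ z₂ : ℝ} (hx : x ∈ Set.Ioo (-1 : ℝ) 1)
    (hy : y ∈ Set.Ioo (-1 : ℝ) 1) (hz₁ : z₁ ∈ Set.uIcc x y) (hz₂ : z₂ ∈ Set.uIcc x y) :
    pseudoHypDist z₁ z₂ ≤ pseudoHypDist x y := by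
  wlog hxy : x ≤ y generalizing x y
  · rw [pseudoHypDist_comm x y]
    exact this hy hx (Set.uIcc_comm x y ▸ hz₁) (Set.uIcc_comm x y ▸ hz₂) (le_of_not_ge hxy)
  wlog hz : z₁ ≤ z₂ generalizing z₁ z₂
  · rw [pseudoHypDist_comm z₁ z₂]
    exact this hz₂ hz₁ (le_of_not_ge hz)
  rw [Set.uIcc_of_le hxy] at hz₁ hz₂
  exact pseudoHypDist_le_of_le_of_le hx.1 hz₁.1 hz hz₂.2 hy.2

theorem stmt_2_general (c : ℝ) :
    ∃ C > 0, ∀ x y : ℝ, x ∈ Set.Ioo (-1:ℝ) 1 → y ∈ Set.Ioo (-1:ℝ) 1 →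
      0 ≤ x * y → |x - y| / |1 - x*y| ≤ c →
      ∀ z₁ ∈ Set.uIcc x y, ∀ z₂ ∈ Set.uIcc x y,
        |z₁ - z₂| / |1 - z₁*z₂| ≤
          (|x - y| / |1 - x*y|) * (1 + C * (|x - y| / |1 - x*y|)) := by
  refine ⟨1, one_pos, fun x y hx hy _ _ z₁ hz₁ z₂ hz₂ => ?_⟩
  have hρ := pseudoHypDist_nonneg x y
  calc pseudoHypDist z₁ z₂ ≤ pseudoHypDist x y := pseudoHypDist_le_of_mem_uIcc hx hy hz₁ hz₂
    _ ≤ pseudoHypDist x y * (1 + 1 * pseudoHypDist x y) :=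
      le_mul_of_one_le_right hρ (by linarith)

theorem stmt_2 (c : ℝ) (hc : 0 ≤ c) (hc' : c < 1/Real.sqrt 5) :
    ∃ C > 0, ∀ x y : ℝ, x ∈ Set.Ioo (-1:ℝ) 1 → y ∈ Set.Ioo (-1:ℝ) 1 →
      0 ≤ x * y → |x - y| / |1 - x*y| ≤ c →
      ∀ z₁ ∈ Set.uIcc x y, ∀ z₂ ∈ Set.uIcc x y,
        |z₁ - z₂| / |1 - z₁*z₂| ≤
          (|x - y| / |1 - x*y|) * (1 + C * (|x - y| / |1 - x*y|)) :=
  stmt_2_general c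
end

section
/- For τ ≥ 0 and u ∈ (0,1), define h(u) = (1-u^{2τ+1})(1+u^{τ+3/2}) - (2τ+1)(1-u)(u^{τ+1/2}+u^{2τ+1}). Then h(u) ≥ (2τ+1)·u^τ·(1-u)·(1-√u)·(1-u^{τ+1}) > 0. -/
/-!
Write `p = u^τ` and `r = √u`. Then `h(u)` minus the claimed lower bound factors as
`(1 + p u r) · (1 - p² u - (2τ+1) p (1 - u))`, so everything reduces to
`(2τ+1) u^τ (1 - u) ≤ 1 - u^(2τ+1)`. Substituting `u = e^(-2t)`, this is `c sinh t ≤ sinh (c t)`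
for `c = 2τ+1 ≥ 1`, `t ≥ 0`, which holds because `sinh` is convex on `[0, ∞)` and vanishes at `0`.
-/

open Real

theorem ConvexOn.map_smul_le_smul {E : Type*} [AddCommGroup E] [Module ℝ E] {s : Set E}
    {f : E → ℝ} (hf : ConvexOn ℝ s f) (h₀ : (0 : E) ∈ s) (hf₀ : f 0 ≤ 0) {x : E} (hx : x ∈ s)
    {t : ℝ} (ht₀ : 0 ≤ t) (ht₁ : t ≤ 1) : f (t • x) ≤ t * f x := by
  have h := hf.2 h₀ hx (sub_nonneg.2 ht₁) ht₀ (sub_add_cancel 1 t)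
  simp only [smul_zero, zero_add, smul_eq_mul] at h
  nlinarith

theorem Real.convexOn_sinh : ConvexOn ℝ (Set.Ici 0) sinh := by
  refine MonotoneOn.convexOn_of_deriv (convex_Ici 0) continuous_sinh.continuousOn
    differentiable_sinh.differentiableOn ?_
  rw [deriv_sinh, interior_Ici]
  intro x hx y hy hxy
  rw [cosh_le_cosh, abs_of_pos hx, abs_of_pos hy]
  exact hxy

theorem Real.mul_sinh_le_sinh_mul {c t : ℝ} (hc : 1 ≤ c) (ht : 0 ≤ t) :
    c * sinh t ≤ sinh (c * t) := by
  have hc₀ : 0 < c := one_pos.trans_le hc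
  have h := convexOn_sinh.map_smul_le_smul (Set.mem_Ici.2 le_rfl) sinh_zero.le
    (Set.mem_Ici.2 (mul_nonneg hc₀.le ht)) (inv_nonneg.2 hc₀.le) (inv_le_one_of_one_le₀ hc)
  rw [smul_eq_mul, inv_mul_cancel_left₀ hc₀.ne'] at h
  rwa [le_inv_mul_iff₀ hc₀] at h

theorem Real.mul_rpow_mul_one_sub_le_one_sub_rpow {τ u : ℝ} (hτ : 0 ≤ τ) (hu₀ : 0 < u)
    (hu₁ : u ≤ 1) : (2 * τ + 1) * u ^ τ * (1 - u) ≤ 1 - u ^ (2 * τ + 1) := by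
  obtain ⟨t, ht, rfl⟩ : ∃ t, 0 ≤ t ∧ exp (-(2 * t)) = u :=
    ⟨-log u / 2, by linarith [log_nonpos hu₀.le hu₁],
      by rw [show -(2 * (-log u / 2)) = log u by ring, exp_log hu₀]⟩
  have h := mul_le_mul_of_nonneg_left (mul_sinh_le_sinh_mul (c := 2 * τ + 1) (by linarith) ht)
    (by positivity : (0 : ℝ) ≤ 2 * exp (-((2 * τ + 1) * t)))
  simp only [← exp_mul, sinh_eq] at h ⊢
  have e₁ : exp (-(2 * t) * τ) = exp (-((2 * τ + 1) * t)) * exp t := by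
    rw [← exp_add]; ring_nf
  have e₂ : exp (-(2 * t)) * exp (-(2 * t) * τ) = exp (-((2 * τ + 1) * t)) * exp (-t) := by
    rw [← exp_add, ← exp_add]; ring_nf
  have e₃ : exp (-(2 * t) * (2 * τ + 1)) =
      exp (-((2 * τ + 1) * t)) * exp (-((2 * τ + 1) * t)) := by
    rw [← exp_add]; ring_nf
  have e₄ : exp (-((2 * τ + 1) * t)) * exp ((2 * τ + 1) * t) = 1 := by rw [← exp_add]; simp
  rw [e₃]
  linear_combination h + (2 * τ + 1) * e₁ - (2 * τ + 1) * e₂ + e₄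

theorem stmt_7 (τ : ℝ) (hτ : 0 ≤ τ) (u : ℝ) (hu : u ∈ Set.Ioo (0:ℝ) 1) :
    (2*τ+1) * u^τ * (1-u) * (1 - Real.sqrt u) * (1 - u^(τ+1)) ≤
      (1 - u^(2*τ+1))*(1 + u^(τ+3/2)) - (2*τ+1)*(1-u)*(u^(τ+1/2) + u^(2*τ+1)) ∧
    0 < (2*τ+1) * u^τ * (1-u) * (1 - Real.sqrt u) * (1 - u^(τ+1)) := by
  obtain ⟨hu₀, hu₁⟩ := hu
  have hbound := mul_rpow_mul_one_sub_le_one_sub_rpow hτ hu₀ hu₁.le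
  have e₁ : u ^ (τ + 1) = u ^ τ * u := by rw [rpow_add hu₀, rpow_one]
  have e₂ : u ^ (2 * τ + 1) = u ^ τ * u ^ τ * u := by
    rw [show 2 * τ + 1 = τ + (τ + 1) by ring, rpow_add hu₀, e₁, mul_assoc]
  have e₃ : u ^ (τ + 1 / 2) = u ^ τ * √u := by rw [rpow_add hu₀, sqrt_eq_rpow]
  have e₄ : u ^ (τ + 3 / 2) = u ^ τ * u * √u := by
    rw [show τ + 3 / 2 = τ + 1 + 1 / 2 by ring, rpow_add hu₀, e₁, sqrt_eq_rpow]
  rw [e₂] at hbound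
  rw [e₁, e₂, e₃, e₄]
  constructor
  · calc _ ≤ (2 * τ + 1) * u ^ τ * (1 - u) * (1 - √u) * (1 - u ^ τ * u)
          + (1 + u ^ τ * u * √u) * (1 - u ^ τ * u ^ τ * u - (2 * τ + 1) * u ^ τ * (1 - u)) :=
          le_add_of_nonneg_right (mul_nonneg (by positivity) (sub_nonneg.2 hbound))
      _ = _ := by ring
  · have h₁ : u ^ τ * u < 1 := by rw [← e₁]; exact rpow_lt_one hu₀.le hu₁ (by linarith)
    have h₂ : √u < 1 := (sqrt_lt' one_pos).2 (by rwa [one_pow])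
    exact mul_pos (mul_pos (by positivity) (sub_pos.2 h₂)) (sub_pos.2 h₁)
end

section
/- For -1/2 < τ < 0, the function u ↦ u^{-2τ}·h'(u) is strictly increasing on (0,1), where h(u) = (1-u^{2τ+1})(1+u^{τ+3/2}) - (2τ+1)(1-u)(u^{τ+1/2}+u^{2τ+1}). Consequently h is strictly decreasing on (0,1) and h(u) > h(1) = 0 for u ∈ (0,1). -/
/-!
Write `h'` for the derivative of `h`. On `(0, 1)` the function `G(u) = u^(-2τ) h'(u)` is a
combination of four powers of `u` plus a constant, and its derivative is

  `A u^(-τ-1/2) - B u^(τ+1/2) + C u^(-τ-3/2) + D`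

with `A, C, D > 0`. Each of `u^(-τ-1/2)`, `u^(-τ-3/2)` and `1` exceeds `u^(τ+1/2)` on `(0, 1)`,
so `G' > u^(τ+1/2) (A - B + C + D) = 0`. Hence `G` is strictly increasing, and `G(1) = 0` makes
`G`, and therefore `h'`, negative on `(0, 1)`. So `h` is strictly decreasing down to `h(1) = 0`.
-/

open Real Set

noncomputable def hFun (τ u : ℝ) : ℝ :=
  (1 - u^(2*τ+1))*(1 + u^(τ+3/2)) - (2*τ+1)*(1-u)*(u^(τ+1/2) + u^(2*τ+1))

noncomputable def hFunDeriv (τ u : ℝ) : ℝ :=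
  -((2*τ+1)*(2*τ+2))*u^(2*τ) + (2*τ+2)*(τ+3/2)*u^(τ+1/2) - (3*τ+5/2)*u^(3*τ+3/2)
    - (2*τ+1)*(τ+1/2)*u^(τ-1/2) + (2*τ+1)*(2*τ+2)*u^(2*τ+1)

noncomputable def scaledDeriv (τ u : ℝ) : ℝ :=
  (2*τ+2)*(τ+3/2)*u^(1/2-τ) - (2*τ+2)*(2*τ+1) - (3*τ+5/2)*u^(τ+3/2)
    - (2*τ+1)*(τ+1/2)*u^(-τ-1/2) + (2*τ+1)*(2*τ+2)*u

noncomputable def scaledDerivDeriv (τ u : ℝ) : ℝ :=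
  (2*τ+2)*(τ+3/2)*(1/2-τ)*u^(-τ-1/2) - (3*τ+5/2)*(τ+3/2)*u^(τ+1/2)
    + (2*τ+1)*(τ+1/2)^2*u^(-τ-3/2) + (2*τ+1)*(2*τ+2)

lemma rpow_mul_rpow_eq {u a b c : ℝ} (hu : 0 < u) (h : a + b = c) : u^a * u^b = u^c := by
  rw [← rpow_add hu, h]

lemma hasDerivAt_hFun (τ : ℝ) {u : ℝ} (hu : 0 < u) :
    HasDerivAt (hFun τ) (hFunDeriv τ u) u := by
  have P (p : ℝ) : HasDerivAt (fun u : ℝ => u^p) (p * u^(p-1)) u :=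
    hasDerivAt_rpow_const (Or.inl hu.ne')
  refine ((((hasDerivAt_const u 1).sub (P _)).mul ((hasDerivAt_const u 1).add (P _))).sub
    (((hasDerivAt_const u (2*τ+1)).mul ((hasDerivAt_const u 1).sub (hasDerivAt_id u))).mul
      ((P _).add (P _)))).congr_deriv ?_
  have ha : u^(2*τ+1-1) * u^(τ+3/2) = u^(3*τ+3/2) := rpow_mul_rpow_eq hu (by ring)
  have hb : u^(2*τ+1) * u^(τ+3/2-1) = u^(3*τ+3/2) := rpow_mul_rpow_eq hu (by ring)
  have hc : u^(1:ℝ) * u^(τ+1/2-1) = u^(τ+1/2) := rpow_mul_rpow_eq hu (by ring)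
  have hd : u^(1:ℝ) * u^(2*τ+1-1) = u^(2*τ+1) := rpow_mul_rpow_eq hu (by ring)
  rw [rpow_one] at hc hd
  simp only [hFunDeriv, Pi.add_apply, Pi.sub_apply, Pi.mul_apply, id_eq,
    show (2*τ+1-1 : ℝ) = 2*τ by ring, show (τ+3/2-1 : ℝ) = τ+1/2 by ring,
    show (τ+1/2-1 : ℝ) = τ-1/2 by ring] at ha hb hc hd ⊢
  linear_combination (-(2*τ+1)) * ha - (τ+3/2) * hb + (2*τ+1)*(τ+1/2) * hc + (2*τ+1)^2 * hd

lemma rpow_neg_two_mul_mul_hFunDeriv (τ : ℝ) {u : ℝ} (hu : 0 < u) :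
    u^(-(2*τ)) * hFunDeriv τ u = scaledDeriv τ u := by
  have h0 : u^(-(2*τ)) * u^(2*τ) = u^(0:ℝ) := rpow_mul_rpow_eq hu (by ring)
  have h1 : u^(-(2*τ)) * u^(τ+1/2) = u^(1/2-τ) := rpow_mul_rpow_eq hu (by ring)
  have h2 : u^(-(2*τ)) * u^(3*τ+3/2) = u^(τ+3/2) := rpow_mul_rpow_eq hu (by ring)
  have h3 : u^(-(2*τ)) * u^(τ-1/2) = u^(-τ-1/2) := rpow_mul_rpow_eq hu (by ring)
  have h4 : u^(-(2*τ)) * u^(2*τ+1) = u^(1:ℝ) := rpow_mul_rpow_eq hu (by ring)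
  rw [rpow_zero] at h0
  rw [rpow_one] at h4
  unfold hFunDeriv scaledDeriv
  linear_combination (-((2*τ+1)*(2*τ+2))) * h0 + ((2*τ+2)*(τ+3/2)) * h1 - (3*τ+5/2) * h2
    - (2*τ+1)*(τ+1/2) * h3 + (2*τ+1)*(2*τ+2) * h4

lemma hasDerivAt_scaledDeriv (τ : ℝ) {u : ℝ} (hu : 0 < u) :
    HasDerivAt (scaledDeriv τ) (scaledDerivDeriv τ u) u := by
  have P (p : ℝ) : HasDerivAt (fun u : ℝ => u^p) (p * u^(p-1)) u :=
    hasDerivAt_rpow_const (Or.inl hu.ne')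
  refine (((((P _).const_mul ((2*τ+2)*(τ+3/2))).sub (hasDerivAt_const u _)).sub
    ((P _).const_mul _)).sub ((P _).const_mul _)).add
    ((hasDerivAt_id u).const_mul ((2*τ+1)*(2*τ+2))) |>.congr_deriv ?_
  rw [scaledDerivDeriv, show (1/2-τ-1 : ℝ) = -τ-1/2 by ring,
    show (τ+3/2-1 : ℝ) = τ+1/2 by ring, show (-τ-1/2-1 : ℝ) = -τ-3/2 by ring]
  ring

lemma scaledDerivDeriv_pos {τ u : ℝ} (hτ1 : -1/2 < τ) (hτ2 : τ < 1/2)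
    (hu : u ∈ Ioo (0:ℝ) 1) :
    0 < scaledDerivDeriv τ u := by
  have hp : u^(τ+1/2) < u^(-τ-1/2) := rpow_lt_rpow_of_exponent_gt hu.1 hu.2 (by linarith)
  have hq : u^(τ+1/2) < u^(-τ-3/2) := rpow_lt_rpow_of_exponent_gt hu.1 hu.2 (by linarith)
  have hr : u^(τ+1/2) < 1 := rpow_lt_one hu.1.le hu.2 (by linarith)
  have hA : 0 < (2*τ+2)*(τ+3/2)*(1/2-τ) :=
    mul_pos (mul_pos (by linarith) (by linarith)) (by linarith)
  have hC : 0 < (2*τ+1)*(τ+1/2)^2 := mul_pos (by linarith) (pow_pos (by linarith) 2)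
  have hD : 0 < (2*τ+1)*(2*τ+2) := mul_pos (by linarith) (by linarith)
  -- the coefficients satisfy `A - B + C + D = 0`, so only the three gaps above remain
  unfold scaledDerivDeriv
  linear_combination mul_lt_mul_of_pos_left hp hA + mul_lt_mul_of_pos_left hq hC
    + mul_lt_mul_of_pos_left hr hD

lemma strictMonoOn_scaledDeriv {τ : ℝ} (hτ1 : -1/2 < τ) (hτ2 : τ < 1/2) :
    StrictMonoOn (scaledDeriv τ) (Ioc 0 1) := by
  refine strictMonoOn_of_deriv_pos (convex_Ioc 0 1)
    (fun u hu => (hasDerivAt_scaledDeriv τ hu.1).continuousAt.continuousWithinAt) fun u hu => ?_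
  rw [interior_Ioc] at hu
  rw [(hasDerivAt_scaledDeriv τ hu.1).deriv]
  exact scaledDerivDeriv_pos hτ1 hτ2 hu

lemma scaledDeriv_one (τ : ℝ) : scaledDeriv τ 1 = 0 := by
  simp only [scaledDeriv, one_rpow]
  ring

lemma hFunDeriv_neg {τ u : ℝ} (hτ1 : -1/2 < τ) (hτ2 : τ < 1/2) (hu : u ∈ Ioo (0:ℝ) 1) :
    hFunDeriv τ u < 0 := by
  have hG : scaledDeriv τ u < scaledDeriv τ 1 :=
    strictMonoOn_scaledDeriv hτ1 hτ2 (Ioo_subset_Ioc_self hu) ⟨one_pos, le_rfl⟩ hu.2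
  rw [scaledDeriv_one, ← rpow_neg_two_mul_mul_hFunDeriv τ hu.1] at hG
  exact neg_of_mul_neg_right hG (rpow_pos_of_pos hu.1 _).le

lemma strictAntiOn_hFun {τ : ℝ} (hτ1 : -1/2 < τ) (hτ2 : τ < 1/2) :
    StrictAntiOn (hFun τ) (Ioc 0 1) := by
  refine strictAntiOn_of_deriv_neg (convex_Ioc 0 1)
    (fun u hu => (hasDerivAt_hFun τ hu.1).continuousAt.continuousWithinAt) fun u hu => ?_
  rw [interior_Ioc] at hu
  rw [(hasDerivAt_hFun τ hu.1).deriv]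
  exact hFunDeriv_neg hτ1 hτ2 hu

lemma hFun_one (τ : ℝ) : hFun τ 1 = 0 := by
  simp [hFun]

theorem stmt_8 (τ : ℝ) (hτ1 : -1/2 < τ) (hτ2 : τ < 0)
    (h : ℝ → ℝ)
    (hdef : ∀ u : ℝ, h u =
      (1 - u^(2*τ+1))*(1 + u^(τ+3/2)) - (2*τ+1)*(1-u)*(u^(τ+1/2) + u^(2*τ+1))) :
    StrictMonoOn (fun u : ℝ => u^(-(2*τ)) * deriv h u) (Set.Ioo 0 1) ∧
    StrictAntiOn h (Set.Ioo 0 1) ∧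
    h 1 = 0 ∧
    ∀ u ∈ Set.Ioo (0:ℝ) 1, 0 < h u := by
  obtain rfl : h = hFun τ := funext hdef
  have hτ_lt : τ < 1/2 := by linarith
  have hanti := strictAntiOn_hFun hτ1 hτ_lt
  refine ⟨(strictMonoOn_scaledDeriv hτ1 hτ_lt).mono Ioo_subset_Ioc_self |>.congr fun u hu => ?_,
    hanti.mono Ioo_subset_Ioc_self, hFun_one τ, fun u hu => ?_⟩
  · rw [(hasDerivAt_hFun τ hu.1).deriv, rpow_neg_two_mul_mul_hFunDeriv τ hu.1]
  · simpa [hFun_one] using hanti (Ioo_subset_Ioc_self hu) ⟨one_pos, le_rfl⟩ hu.2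
end

section
/- For every τ > -1/2 and every u ∈ (0,1), the quantity Δ_τ(u) := u^{τ+1/2}·[u(1-u^{2τ+1}) - (2τ+1)(1-u)]/[1 - u^{2τ+1} - (2τ+1)u^{2τ+1}(1-u)] satisfies -1 < Δ_τ(u) < 0. -/
/-!
Write `σ = 2τ + 1 > 0` and `v = u ^ (τ + 1/2)`, so `v² = u ^ σ`. Bernoulli's inequality makes the
numerator negative, and `u ^ σ (1 + σ (1 - u)) < 1` (from `log u < u - 1` and `1 + t ≤ eᵗ`) makes the
denominator positive, whence `Δ < 0`. For `Δ > -1`, the numerator of `Δ + 1` factors as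
`(1 + v) (1 - u ^ β - β u ^ ((β - 1)/2) (1 - u))` with `β = σ + 1 > 1`; under `u = e^{-2x}` the
second factor is a positive multiple of `sinh (β x) - β sinh x`, which is positive because
`cosh` increases on `[0, ∞)`.
-/

open Real Set

theorem Real.mul_sinh_lt_sinh_mul {β x : ℝ} (hβ : 1 < β) (hx : 0 < x) :
    β * sinh x < sinh (β * x) := by
  set f : ℝ → ℝ := fun y => sinh (β * y) - β * sinh y
  have hmono : StrictMonoOn f (Ici 0) := by
    refine strictMonoOn_of_deriv_pos (convex_Ici 0) (by fun_prop) fun y hy => ?_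
    rw [interior_Ici, mem_Ioi] at hy
    have hf' : HasDerivAt f (cosh (β * y) * (β * 1) - β * cosh y) y :=
      ((hasDerivAt_id y).const_mul β).sinh.sub ((hasDerivAt_sinh y).const_mul β)
    have hcosh : cosh y < cosh (β * y) := by
      rw [cosh_lt_cosh, abs_of_pos hy, abs_of_pos (by positivity)]
      nlinarith
    rw [hf'.deriv]
    nlinarith
  have := hmono self_mem_Ici hx.le hx
  simp only [f, mul_zero, sinh_zero, sub_zero] at this
  linarith

theorem mul_rpow_mul_one_sub_lt_one_sub_rpow {β u : ℝ} (hβ : 1 < β) (hu : u ∈ Ioo (0 : ℝ) 1) :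
    β * u ^ ((β - 1) / 2) * (1 - u) < 1 - u ^ β := by
  obtain ⟨x, hx, rfl⟩ : ∃ x > 0, u = exp (-(2 * x)) :=
    ⟨-log u / 2, by linarith [log_neg hu.1 hu.2],
      by rw [show -(2 * (-log u / 2)) = log u by ring, exp_log hu.1]⟩
  have key := mul_sinh_lt_sinh_mul hβ hx
  rw [sinh_eq, sinh_eq] at key
  simp only [← exp_mul]
  have h₁ : exp (-(2 * x) * ((β - 1) / 2)) = exp (-(β * x)) * exp x := by
    rw [← exp_add]; ring_nf
  have h₂ : exp (-(2 * x)) = exp (-x) * exp (-x) := by rw [← exp_add]; ring_nf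
  have h₃ : exp (-(2 * x) * β) = exp (-(β * x)) * exp (-(β * x)) := by rw [← exp_add]; ring_nf
  have h₄ : exp x * exp (-x) = 1 := by rw [← exp_add, add_neg_cancel, exp_zero]
  have h₅ : exp (β * x) * exp (-(β * x)) = 1 := by rw [← exp_add, add_neg_cancel, exp_zero]
  rw [h₁, h₂, h₃]
  calc β * (exp (-(β * x)) * exp x) * (1 - exp (-x) * exp (-x))
      = 2 * exp (-(β * x)) * (β * ((exp x - exp (-x)) / 2)) := by
        linear_combination -β * exp (-(β * x)) * exp (-x) * h₄
    _ < 2 * exp (-(β * x)) * ((exp (β * x) - exp (-(β * x))) / 2) :=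
        mul_lt_mul_of_pos_left key (by positivity)
    _ = 1 - exp (-(β * x)) * exp (-(β * x)) := by linear_combination h₅

theorem rpow_mul_one_add_mul_one_sub_lt_one {σ u : ℝ} (hσ : 0 < σ) (hu : u ∈ Ioo (0 : ℝ) 1) :
    u ^ σ * (1 + σ * (1 - u)) < 1 := by
  calc u ^ σ * (1 + σ * (1 - u)) ≤ exp (σ * log u) * exp (σ * (1 - u)) := by
        rw [rpow_def_of_pos hu.1, mul_comm (log u)]
        gcongr
        linarith [add_one_le_exp (σ * (1 - u))]
    _ < exp (σ * log u) * exp (σ * (-log u)) := by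
        gcongr
        linarith [log_lt_sub_one_of_pos hu.1 hu.2.ne]
    _ = 1 := by rw [← exp_add, mul_neg, add_neg_cancel, exp_zero]

theorem mul_one_sub_rpow_lt_mul_one_sub {σ u : ℝ} (hσ : 0 < σ) (hu : u ∈ Ioo (0 : ℝ) 1) :
    u * (1 - u ^ σ) < σ * (1 - u) := by
  have hbern := one_add_mul_self_lt_rpow_one_add (s := u - 1) (by linarith [hu.1])
    (sub_ne_zero.2 hu.2.ne) (show 1 < σ + 1 by linarith)
  rw [add_sub_cancel, rpow_add_one hu.1.ne'] at hbern
  linarith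

theorem stmt_9 (τ : ℝ) (hτ : τ > -1/2) (u : ℝ) (hu : u ∈ Set.Ioo (0:ℝ) 1) :
    -1 < u^(τ+1/2) * (u*(1 - u^(2*τ+1)) - (2*τ+1)*(1-u)) /
        (1 - u^(2*τ+1) - (2*τ+1)*u^(2*τ+1)*(1-u)) ∧
    u^(τ+1/2) * (u*(1 - u^(2*τ+1)) - (2*τ+1)*(1-u)) /
        (1 - u^(2*τ+1) - (2*τ+1)*u^(2*τ+1)*(1-u)) < 0 := by
  have hσ : 0 < 2 * τ + 1 := by linarith
  have hv : 0 < u ^ (τ + 1/2) := rpow_pos_of_pos hu.1 _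
  have hv_sq : u ^ (τ + 1/2) * u ^ (τ + 1/2) = u ^ (2 * τ + 1) := by
    rw [← rpow_add hu.1]; ring_nf
  have hnum := mul_one_sub_rpow_lt_mul_one_sub hσ hu
  have hden := rpow_mul_one_add_mul_one_sub_lt_one hσ hu
  have hK := mul_rpow_mul_one_sub_lt_one_sub_rpow (show 1 < 2 * τ + 2 by linarith) hu
  rw [show (2 * τ + 2 - 1) / 2 = τ + 1/2 by ring,
    show 2 * τ + 2 = 2 * τ + 1 + 1 by ring, rpow_add_one hu.1.ne'] at hK
  have hsum : 0 < u^(τ+1/2) * (u*(1 - u^(2*τ+1)) - (2*τ+1)*(1-u)) +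
      (1 - u^(2*τ+1) - (2*τ+1)*u^(2*τ+1)*(1-u)) := by
    have hfac : u^(τ+1/2) * (u*(1 - u^(2*τ+1)) - (2*τ+1)*(1-u)) +
        (1 - u^(2*τ+1) - (2*τ+1)*u^(2*τ+1)*(1-u)) = (1 + u^(τ+1/2)) *
          (1 - u^(2*τ+1) * u - (2*τ+1+1) * u^(τ+1/2) * (1-u)) := by
      linear_combination (2*τ+2) * (1-u) * hv_sq
    rw [hfac]
    exact mul_pos (by linarith) (by linarith)
  have hD : 0 < 1 - u^(2*τ+1) - (2*τ+1)*u^(2*τ+1)*(1-u) := by linarith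
  refine ⟨?_, div_neg_of_neg_of_pos (mul_neg_of_pos_of_neg hv (by linarith)) hD⟩
  rw [lt_div_iff₀ hD]
  linarith
end

section
/- ∫₀^∞ (tanh²(v) + tanh(v)·sech(v)·arcsin(sech(v)) − 1) dv = π/2 − 2. -/
/-!
Substitute `s = sech v`, so that `tanh v = √(1 - s²)` for `v ≥ 0`. The integrand is then the
`v`-derivative of `-G (sech v)` with `G s = s · arcsin s + 2 √(1 - s²)`, hence the integral is
`G 1 - G 0 = π/2 - 2`. The integrand is nonpositive, because with `θ = arcsin s` the inequality
`arcsin s ≤ s / √(1 - s²)` is `θ ≤ tan θ`; so integrability over `(0, ∞)` comes for free from the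
limit of the primitive.
-/

open Real Set Filter Topology MeasureTheory

noncomputable def kacPrimitive (s : ℝ) : ℝ := s * arcsin s + 2 * √(1 - s ^ 2)

lemma continuous_kacPrimitive : Continuous kacPrimitive := by
  unfold kacPrimitive; fun_prop

lemma hasDerivAt_kacPrimitive {s : ℝ} (hs : s ∈ Ioo (-1 : ℝ) 1) :
    HasDerivAt kacPrimitive (arcsin s - s / √(1 - s ^ 2)) s := by
  obtain ⟨hs₀, hs₁⟩ := hs
  have hpos : 0 < √(1 - s ^ 2) := sqrt_pos.2 (by nlinarith)
  have hsqrt : HasDerivAt (fun s => √(1 - s ^ 2)) (-(2 * s) / (2 * √(1 - s ^ 2))) s := by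
    simpa using ((hasDerivAt_pow 2 s).const_sub 1).sqrt (by nlinarith)
  refine (((hasDerivAt_id' s).mul (hasDerivAt_arcsin hs₀.ne' hs₁.ne)).add
    (hsqrt.const_mul 2)).congr_deriv ?_
  field_simp
  ring

lemma arcsin_le_div_sqrt_one_sub_sq {s : ℝ} (hs₀ : 0 ≤ s) (hs₁ : s < 1) :
    arcsin s ≤ s / √(1 - s ^ 2) :=
  tan_arcsin s ▸ le_tan (arcsin_nonneg.2 hs₀) (arcsin_lt_pi_div_two.2 hs₁)

lemma tanh_nonneg {v : ℝ} (hv : 0 ≤ v) : 0 ≤ tanh v := by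
  rw [tanh_eq_sinh_div_cosh]
  exact div_nonneg (sinh_nonneg_iff.2 hv) (cosh_pos v).le

lemma sqrt_one_sub_inv_cosh_sq {v : ℝ} (hv : 0 ≤ v) : √(1 - (cosh v)⁻¹ ^ 2) = tanh v := by
  rw [← sqrt_sq (tanh_nonneg hv), tanh_eq_sinh_div_cosh]
  congr 1
  have := cosh_pos v
  field_simp
  linear_combination cosh_sq v

lemma tendsto_inv_cosh_atTop : Tendsto (fun v => (cosh v)⁻¹) atTop (𝓝 0) := by
  refine tendsto_inv_atTop_zero.comp
    (tendsto_atTop_mono (fun v => ?_) (tendsto_exp_atTop.atTop_div_const two_pos))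
  rw [cosh_eq]
  linarith [exp_pos (-v)]

lemma inv_cosh_mem_Ioo {v : ℝ} (hv : v ≠ 0) : (cosh v)⁻¹ ∈ Ioo (-1 : ℝ) 1 :=
  ⟨by linarith [inv_pos.2 (cosh_pos v)], inv_lt_one_of_one_lt₀ (one_lt_cosh.2 hv)⟩

lemma hasDerivAt_neg_kacPrimitive_inv_cosh {v : ℝ} (hv : v ≠ 0) :
    HasDerivAt (fun v => -kacPrimitive (cosh v)⁻¹)
      ((arcsin (cosh v)⁻¹ - (cosh v)⁻¹ / √(1 - (cosh v)⁻¹ ^ 2)) * (cosh v)⁻¹ * tanh v) v := by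
  refine ((hasDerivAt_kacPrimitive (inv_cosh_mem_Ioo hv)).comp v
    ((hasDerivAt_cosh v).inv (cosh_pos v).ne')).neg.congr_deriv ?_
  rw [tanh_eq_sinh_div_cosh]
  ring

lemma kac_integrand_eq {v : ℝ} (hv : 0 < v) :
    tanh v ^ 2 + tanh v * (1 / cosh v) * arcsin (1 / cosh v) - 1
      = (arcsin (cosh v)⁻¹ - (cosh v)⁻¹ / √(1 - (cosh v)⁻¹ ^ 2)) * (cosh v)⁻¹ * tanh v := by
  have hcosh : cosh v ≠ 0 := (cosh_pos v).ne'
  rw [sqrt_one_sub_inv_cosh_sq hv.le, one_div, tanh_eq_sinh_div_cosh]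
  field_simp
  linear_combination -cosh_sq v

theorem stmt_12 :
    ∫ v in Set.Ioi (0:ℝ),
      (Real.tanh v ^ 2 + Real.tanh v * (1/Real.cosh v) * Real.arcsin (1/Real.cosh v) - 1)
      = Real.pi/2 - 2 := by
  rw [setIntegral_congr_fun measurableSet_Ioi (fun v hv => kac_integrand_eq hv),
    integral_Ioi_of_hasDerivAt_of_nonpos
      (continuous_kacPrimitive.comp
        (continuous_cosh.inv₀ fun v => (cosh_pos v).ne')).neg.continuousWithinAt
      (fun v hv => hasDerivAt_neg_kacPrimitive_inv_cosh (ne_of_gt hv))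
      (fun v hv => ?_)
      ((continuous_kacPrimitive.tendsto 0).comp tendsto_inv_cosh_atTop).neg]
  · simp only [kacPrimitive, Function.comp_apply, Pi.neg_apply, Pi.inv_apply, cosh_zero, inv_one,
      arcsin_zero, arcsin_one, one_pow, sub_self, sqrt_zero, zero_pow two_ne_zero, sub_zero, sqrt_one]
    ring
  · obtain ⟨-, hs₁⟩ := inv_cosh_mem_Ioo (ne_of_gt hv)
    have hs : 0 ≤ (cosh v)⁻¹ := inv_nonneg.2 (cosh_pos v).le
    exact mul_nonpos_of_nonpos_of_nonneg (mul_nonpos_of_nonpos_of_nonneg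
      (sub_nonpos.2 (arcsin_le_div_sqrt_one_sub_sq hs hs₁)) hs) (tanh_nonneg (le_of_lt hv))
end

section
/- For τ > -1/2, the function f_τ is bounded on [0,1]: sup_{u∈[0,1]} |f_τ(u)| < ∞. -/
/-!
Put `c = 2τ + 1 > 0`, `B = 1 - u^c`, `D = 1 - u^c - c u^c (1 - u)` and `ψ = u B - c (1 - u)`,
so that `Σ = D / B^{3/2}` and `Δ Σ = u^{c/2} ψ / B^{3/2}`. The inequalities `ln u ≤ u - 1` and
Bernoulli give `D ≥ 0 ≥ ψ`, and the identity `D - ψ = (c + 1)(1 - u) B` then bounds both `D` and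
`|ψ|` by `(c + 1)(1 - u) B`. Since `B ≥ min(1, c)(1 - u)`, both `Σ` and `Δ Σ` are bounded by
`(c + 1) / √min(1, c)`, and `f = √(1 - Δ²) Σ + (Δ Σ) arcsin Δ - 1` is bounded as well.
-/

open Real Set

section RpowEstimates

variable {c u : ℝ}

theorem one_sub_rpow_sub_mul_rpow_nonneg (hc : 0 ≤ c) (hu : 0 < u) :
    0 ≤ 1 - u ^ c - c * u ^ c * (1 - u) := by
  have hlog : c * (log u + (1 - u)) ≤ 0 :=
    mul_nonpos_of_nonneg_of_nonpos hc (by linarith [log_le_sub_one_of_pos hu])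
  have hprod : u ^ c * (1 + c * (1 - u)) ≤ 1 :=
    calc u ^ c * (1 + c * (1 - u)) ≤ u ^ c * exp (c * (1 - u)) := by
          gcongr; linarith [add_one_le_exp (c * (1 - u))]
      _ = exp (c * (log u + (1 - u))) := by rw [rpow_def_of_pos hu, ← exp_add]; ring_nf
      _ ≤ 1 := exp_le_one_iff.2 hlog
  linarith

theorem mul_one_sub_rpow_sub_nonpos (hc : 0 ≤ c) (hu : 0 < u) :
    u * (1 - u ^ c) - c * (1 - u) ≤ 0 := by
  have bernoulli := one_add_mul_self_le_rpow_one_add (s := u - 1) (p := c + 1)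
    (by linarith) (by linarith)
  rw [add_sub_cancel, rpow_add_one hu.ne'] at bernoulli
  nlinarith

theorem min_one_mul_one_sub_le_one_sub_rpow (hc : 0 ≤ c) (hu0 : 0 ≤ u) (hu1 : u ≤ 1) :
    min 1 c * (1 - u) ≤ 1 - u ^ c := by
  rcases le_total c 1 with hc1 | hc1
  · have bernoulli := rpow_one_add_le_one_add_mul_self (s := u - 1) (by linarith) hc hc1
    rw [add_sub_cancel] at bernoulli
    rw [min_eq_right hc1]
    linarith
  · have hle : u ^ c ≤ u ^ (1 : ℝ) := rpow_le_rpow_of_exponent_ge' hu0 hu1 zero_le_one hc1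
    rw [rpow_one] at hle
    rw [min_eq_left hc1]
    linarith

theorem abs_div_one_sub_rpow_three_halves_le (hc : 0 < c) (hu0 : 0 ≤ u) (hu1 : u < 1) {x : ℝ}
    (hx : |x| ≤ (c + 1) * (1 - u) * (1 - u ^ c)) :
    |x / (1 - u ^ c) ^ ((3 : ℝ) / 2)| ≤ (c + 1) / √(min 1 c) := by
  have hm : 0 < min 1 c := lt_min one_pos hc
  have hB : 0 < 1 - u ^ c := sub_pos.2 (rpow_lt_one hu0 hu1 hc)
  have hB32 : (1 - u ^ c) ^ ((3 : ℝ) / 2) = (1 - u ^ c) * √(1 - u ^ c) := by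
    rw [show (3 : ℝ) / 2 = 1 + 1 / 2 by norm_num, rpow_add hB, rpow_one, sqrt_eq_rpow]
  have hsqrt : √(min 1 c) * (1 - u) ≤ √(1 - u ^ c) := by
    rw [le_sqrt (by positivity) hB.le, mul_pow, sq_sqrt hm.le]
    nlinarith [min_one_mul_one_sub_le_one_sub_rpow hc.le hu0 hu1.le, min_le_left 1 c]
  rw [hB32, abs_div, abs_of_pos (by positivity : 0 < (1 - u ^ c) * √(1 - u ^ c)),
    div_le_div_iff₀ (by positivity) (by positivity)]
  calc |x| * √(min 1 c) ≤ (c + 1) * (1 - u ^ c) * (√(min 1 c) * (1 - u)) := by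
        nlinarith [sqrt_nonneg (min 1 c)]
    _ ≤ (c + 1) * (1 - u ^ c) * √(1 - u ^ c) := by gcongr
    _ = (c + 1) * ((1 - u ^ c) * √(1 - u ^ c)) := by ring

end RpowEstimates

theorem abs_div_mul_div_le (a d b : ℝ) : |a / d * (d / b)| ≤ |a / b| := by
  rcases eq_or_ne d 0 with rfl | hd
  · simp
  · rw [div_mul_div_cancel₀ hd]

theorem abs_sqrt_add_mul_arcsin_mul_sub_one_le {d s C : ℝ} (hs : |s| ≤ C) (hds : |d * s| ≤ C) :
    |(√(1 - d ^ 2) + d * arcsin d) * s - 1| ≤ (1 + π / 2) * C + 1 := by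
  have hsqrt : |√(1 - d ^ 2) * s| ≤ C := by
    rw [abs_mul, abs_of_nonneg (sqrt_nonneg _)]
    exact (mul_le_of_le_one_left (abs_nonneg s) (sqrt_le_one.2 (by nlinarith))).trans hs
  have harcsin : |arcsin d| ≤ π / 2 :=
    abs_le.2 ⟨by linarith [neg_pi_div_two_le_arcsin d], arcsin_le_pi_div_two d⟩
  have hprod : |d * s * arcsin d| ≤ C * (π / 2) := by
    rw [abs_mul]; exact mul_le_mul hds harcsin (abs_nonneg _) ((abs_nonneg _).trans hs)
  rw [abs_le] at hsqrt hprod ⊢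
  constructor <;> nlinarith [hsqrt.1, hsqrt.2, hprod.1, hprod.2]

theorem stmt_14 (τ : ℝ) (hτ : τ > -1/2)
    (Δ Sg f : ℝ → ℝ)
    (hΔ : ∀ u ∈ Set.Ioo (0:ℝ) 1, Δ u =
      u^(τ+1/2) * (u*(1 - u^(2*τ+1)) - (2*τ+1)*(1-u)) /
        (1 - u^(2*τ+1) - (2*τ+1)*u^(2*τ+1)*(1-u)))
    (hSg : ∀ u ∈ Set.Ioo (0:ℝ) 1, Sg u =
      (1 - u^(2*τ+1) - (2*τ+1)*(1-u)*u^(2*τ+1)) / (1 - u^(2*τ+1))^((3:ℝ)/2))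
    (hf : ∀ u ∈ Set.Ioo (0:ℝ) 1, f u =
      (Real.sqrt (1 - (Δ u)^2) + Δ u * Real.arcsin (Δ u)) * Sg u - 1)
    (hf0 : f 0 = 0) (hf1 : f 1 = -1) :
    ∃ M : ℝ, ∀ u ∈ Set.Icc (0:ℝ) 1, |f u| ≤ M := by
  set c := 2 * τ + 1
  have hc : 0 < c := by linarith
  set K := (c + 1) / √(min 1 c)
  have hK : 0 ≤ K := by positivity
  refine ⟨(1 + π / 2) * K + 1, fun u ⟨hu0, hu1⟩ => ?_⟩
  rcases hu0.eq_or_lt with rfl | hu0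
  · rw [hf0, abs_zero]; positivity
  rcases hu1.eq_or_lt with rfl | hu1
  · rw [hf1, abs_neg, abs_one]; nlinarith [pi_pos]
  have hu : u ∈ Ioo 0 1 := ⟨hu0, hu1⟩
  have hD := one_sub_rpow_sub_mul_rpow_nonneg hc.le hu0
  have hψ := mul_one_sub_rpow_sub_nonpos hc.le hu0
  have hsplit : (c + 1) * (1 - u) * (1 - u ^ c) =
      (1 - u ^ c - c * u ^ c * (1 - u)) - (u * (1 - u ^ c) - c * (1 - u)) := by ring
  have hSg_eq : Sg u = (1 - u ^ c - c * u ^ c * (1 - u)) / (1 - u ^ c) ^ ((3 : ℝ) / 2) := by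
    rw [hSg u hu, mul_right_comm]
  have hSg_le : |Sg u| ≤ K := by
    rw [hSg_eq]
    exact abs_div_one_sub_rpow_three_halves_le hc hu0.le hu1 (by rw [abs_of_nonneg hD]; linarith)
  have hΔSg_le : |Δ u * Sg u| ≤ K := by
    rw [hΔ u hu, hSg_eq]
    -- an inequality rather than a cancellation: where `D = 0`, division by zero makes `Δ u = 0`
    refine (abs_div_mul_div_le _ _ _).trans (abs_div_one_sub_rpow_three_halves_le hc hu0.le hu1 ?_)
    have hpow : u ^ (τ + 1 / 2) ≤ 1 := rpow_le_one hu0.le hu1.le (by linarith)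
    rw [abs_mul, abs_of_nonneg (rpow_nonneg hu0.le _), abs_of_nonpos hψ]
    nlinarith [rpow_nonneg hu0.le (τ + 1 / 2)]
  rw [hf u hu]
  exact abs_sqrt_add_mul_arcsin_mul_sub_one_le hSg_le hΔSg_le
end

section
/- For τ > -1/2 there exist constants C > 0 and u₀ ∈ (0,1) such that |f_τ(u)| ≤ C·u^{2τ+1} for all u ∈ (0, u₀), and |f_τ(u) + 1| ≤ C·√(1-u) for all u ∈ (1−u₀, 1). -/
/-!
Write `p = 2τ + 1`, `a = u ^ p`, `N = u (1 - a) - p (1 - u)` and `D = 1 - a - p a (1 - u)`, so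
that `Δ = u ^ (p / 2) N / D`, `Σ = D / (1 - a) ^ (3 / 2)` and `f = G(Δ) Σ - 1` with
`G x = √(1 - x²) + x arcsin x`, the primitive of `arcsin` with `G 0 = 1`.

As `u → 0`, `a → 0` while `N` stays bounded and `D → 1`; hence `Δ² = O(a)`, `Σ = 1 + O(a)`, and
`|G x - 1| ≤ 3 x²` (from `|arcsin x| ≤ π |x| / 2`) gives `f = O(a)`.

As `u → 1`, put `ε = 1 - u`. The bounds `1 - p ε / u ≤ a ≤ exp (-p ε)` give `0 < D = O(ε²)`,
`|N| = O(ε²)` and `1 - a ≥ p ε / 2`. Since `|G x| ≤ 1 + 2 |x|` and `D` cancels in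
`Δ Σ = u ^ (p / 2) N / (1 - a) ^ (3 / 2)`, we get `|f + 1| = |G(Δ) Σ| = O(ε² / ε^(3/2)) = O(√ε)`.
-/

open Real Set

lemma arcsin_le_pi_div_two_mul {x : ℝ} (hx0 : 0 ≤ x) (hx1 : x ≤ 1) : arcsin x ≤ π / 2 * x := by
  have hy0 : 0 ≤ π / 2 * x := by positivity
  have hy1 : π / 2 * x ≤ π / 2 := mul_le_of_le_one_right (by positivity) hx1
  have hsin : x ≤ sin (π / 2 * x) := by
    have := mul_le_sin hy0 hy1
    rwa [← mul_assoc, div_mul_div_cancel₀ pi_ne_zero, div_self two_ne_zero, one_mul] at this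
  calc arcsin x ≤ arcsin (sin (π / 2 * x)) := arcsin_le_arcsin hsin
    _ = π / 2 * x := arcsin_sin (by linarith [pi_pos]) hy1

lemma abs_arcsin_le_pi_div_two_mul_abs {x : ℝ} (hx : |x| ≤ 1) : |arcsin x| ≤ π / 2 * |x| := by
  rcases le_total 0 x with h | h
  · rw [abs_of_nonneg h, abs_of_nonneg (arcsin_nonneg.2 h)]
    exact arcsin_le_pi_div_two_mul h (by rwa [abs_of_nonneg h] at hx)
  · rw [abs_of_nonpos h, abs_of_nonpos (arcsin_nonpos.2 h), ← arcsin_neg]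
    exact arcsin_le_pi_div_two_mul (neg_nonneg.2 h) (by rwa [abs_of_nonpos h] at hx)

lemma rpow_three_halves {t : ℝ} (ht : 0 ≤ t) : t ^ (3 / 2 : ℝ) = t * √t := by
  rw [show (3 / 2 : ℝ) = 1 + 1 / 2 by norm_num, rpow_add' ht (by norm_num), rpow_one,
    sqrt_eq_rpow]

lemma rpow_div_two_sq {u : ℝ} (hu : 0 ≤ u) (p : ℝ) : (u ^ (p / 2)) ^ 2 = u ^ p := by
  rw [← rpow_natCast, ← rpow_mul hu]
  norm_num

lemma mul_one_sub_rpow_le {p u : ℝ} (hp : 0 ≤ p) (hu : 0 < u) :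
    u * (1 - u ^ p) ≤ p * (1 - u) := by
  have hlog : 1 - u⁻¹ ≤ log u := one_sub_inv_le_log_of_pos hu
  have hexp : log u * p + 1 ≤ u ^ p := by rw [rpow_def_of_pos hu]; exact add_one_le_exp _
  have hinv : u * (1 - u⁻¹) = u - 1 := by field_simp
  nlinarith [mul_le_mul_of_nonneg_left hlog (mul_nonneg hu.le hp),
    mul_le_mul_of_nonneg_left hexp hu.le]

lemma rpow_mul_one_add_lt_one {p u : ℝ} (hp : 0 < p) (hu0 : 0 < u) (hu1 : u < 1) :
    u ^ p * (1 + p * (1 - u)) < 1 := by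
  have hx : 0 < p * (1 - u) := mul_pos hp (by linarith)
  have hlog : log u * p + p * (1 - u) ≤ 0 := by nlinarith [log_le_sub_one_of_pos hu0]
  calc u ^ p * (1 + p * (1 - u)) < exp (log u * p) * exp (p * (1 - u)) := by
        rw [rpow_def_of_pos hu0]
        gcongr
        linarith [add_one_lt_exp hx.ne']
    _ = exp (log u * p + p * (1 - u)) := (exp_add _ _).symm
    _ ≤ 1 := exp_le_one_iff.2 hlog

noncomputable def arcsinPrimitive (x : ℝ) : ℝ := √(1 - x ^ 2) + x * arcsin x

lemma abs_arcsinPrimitive_sub_one_le {x : ℝ} (hx : x ^ 2 ≤ 1) :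
    |arcsinPrimitive x - 1| ≤ 3 * x ^ 2 := by
  have hx' : |x| ≤ 1 := (sq_le_one_iff_abs_le_one x).1 hx
  have hsqrt_le : √(1 - x ^ 2) ≤ 1 := sqrt_le_one.2 (by nlinarith)
  have hsqrt_ge : 1 - x ^ 2 ≤ √(1 - x ^ 2) := by
    have h0 : 0 ≤ 1 - x ^ 2 := by linarith
    nlinarith [sq_sqrt h0, sqrt_nonneg (1 - x ^ 2)]
  have harcsin : |x * arcsin x| ≤ 2 * x ^ 2 := by
    rw [abs_mul, ← sq_abs x]
    have := mul_le_mul_of_nonneg_left (abs_arcsin_le_pi_div_two_mul_abs hx') (abs_nonneg x)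
    nlinarith [pi_le_four, sq_nonneg |x|]
  rw [abs_le] at harcsin
  rw [arcsinPrimitive, abs_le]
  constructor <;> linarith

lemma abs_arcsinPrimitive_mul_le (x y : ℝ) :
    |arcsinPrimitive x * y| ≤ |y| + 2 * |x * y| := by
  have harcsin : |arcsin x| ≤ 2 :=
    abs_le.2 ⟨by linarith [neg_pi_div_two_le_arcsin x, pi_le_four],
      by linarith [arcsin_le_pi_div_two x, pi_le_four]⟩
  have hG : |arcsinPrimitive x| ≤ 1 + 2 * |x| :=
    calc |arcsinPrimitive x| ≤ |√(1 - x ^ 2)| + |x| * |arcsin x| := by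
          rw [arcsinPrimitive, ← abs_mul]; exact abs_add_le _ _
      _ ≤ 1 + |x| * 2 := by
          rw [abs_of_nonneg (sqrt_nonneg _)]
          gcongr
          exact sqrt_le_one.2 (by nlinarith)
      _ = 1 + 2 * |x| := by ring
  rw [abs_mul, abs_mul x]
  nlinarith [abs_nonneg y]

namespace ArcsinCorrelation

variable {p u : ℝ}

noncomputable def numer (p u : ℝ) : ℝ := u * (1 - u ^ p) - p * (1 - u)

noncomputable def denom (p u : ℝ) : ℝ := 1 - u ^ p - p * u ^ p * (1 - u)

noncomputable def delta (p u : ℝ) : ℝ := u ^ (p / 2) * numer p u / denom p u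

noncomputable def sigma (p u : ℝ) : ℝ := denom p u / (1 - u ^ p) ^ (3 / 2 : ℝ)

lemma abs_numer_le (hp : 0 ≤ p) (hu0 : 0 < u) (hu1 : u < 1) : |numer p u| ≤ 1 + p := by
  have ha0 : 0 ≤ u ^ p := rpow_nonneg hu0.le p
  have ha1 : u ^ p ≤ 1 := rpow_le_one hu0.le hu1.le hp
  rw [numer, abs_le]
  constructor <;> nlinarith [mul_nonneg hu0.le ha0]

lemma one_sub_mul_rpow_le_denom (hp : 0 ≤ p) (hu0 : 0 < u) :
    1 - (1 + p) * u ^ p ≤ denom p u := by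
  have := mul_nonneg (mul_nonneg hp (rpow_nonneg hu0.le p)) hu0.le
  rw [denom]; nlinarith

lemma denom_le_one (hp : 0 ≤ p) (hu0 : 0 < u) (hu1 : u < 1) : denom p u ≤ 1 := by
  have := mul_nonneg (mul_nonneg hp (rpow_nonneg hu0.le p)) (sub_nonneg.2 hu1.le)
  rw [denom]; linarith [rpow_nonneg hu0.le p]

lemma sq_delta_le (hp : 0 ≤ p) (hu0 : 0 < u) (hu1 : u < 1) (hD : 1 / 2 ≤ denom p u) :
    delta p u ^ 2 ≤ 4 * (1 + p) ^ 2 * u ^ p := by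
  have hN : numer p u ^ 2 ≤ (1 + p) ^ 2 := sq_le_sq' (abs_le.1 (abs_numer_le hp hu0 hu1)).1
    (abs_le.1 (abs_numer_le hp hu0 hu1)).2
  rw [delta, div_pow, mul_pow, rpow_div_two_sq hu0.le, div_le_iff₀ (by positivity)]
  have ha0 : 0 ≤ u ^ p := rpow_nonneg hu0.le p
  have hD2 : 1 / 4 ≤ denom p u ^ 2 := by nlinarith
  nlinarith [mul_le_mul_of_nonneg_left hN ha0, mul_le_mul_of_nonneg_left hD2
    (mul_nonneg ha0 (sq_nonneg (1 + p)))]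

lemma abs_arcsinPrimitive_delta_mul_sigma_sub_one_le (hp : 0 ≤ p) (hu0 : 0 < u) (hu1 : u < 1)
    (hsmall : 4 * (1 + p) ^ 2 * u ^ p ≤ 1) :
    |arcsinPrimitive (delta p u) * sigma p u - 1| ≤ (24 * (1 + p) ^ 2 + 2 * (2 + p)) * u ^ p := by
  set a := u ^ p with ha
  have ha0 : 0 ≤ a := rpow_nonneg hu0.le p
  have ha1 : a ≤ 1 := rpow_le_one hu0.le hu1.le hp
  have hpa : (1 + p) * a ≤ 1 / 4 := by nlinarith [mul_nonneg hp ha0]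
  have hD := one_sub_mul_rpow_le_denom hp hu0
  have hD1 := denom_le_one hp hu0 hu1
  set B := (1 - a) ^ (3 / 2 : ℝ) with hB
  have hB_ge : 1 - 2 * a ≤ B := by
    rw [hB, rpow_three_halves (by linarith)]
    have := sqrt_nonneg (1 - a)
    nlinarith [sqrt_le_one.2 (by linarith : 1 - a ≤ 1),
      sq_sqrt (by linarith : 0 ≤ 1 - a)]
  have hB1 : B ≤ 1 := rpow_le_one (by linarith) (by linarith) (by norm_num)
  have hB_half : 1 / 2 ≤ B := by nlinarith [mul_nonneg hp ha0]
  have hB_pos : 0 < B := by linarith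
  have hDelta : delta p u ^ 2 ≤ 4 * (1 + p) ^ 2 * a := sq_delta_le hp hu0 hu1 (by linarith)
  have hSigma : |sigma p u| ≤ 2 := by
    rw [sigma, ← ha, ← hB, abs_div, abs_of_pos hB_pos, div_le_iff₀ hB_pos, abs_le]
    constructor <;> nlinarith
  have hSigma1 : |sigma p u - 1| ≤ 2 * (2 + p) * a := by
    rw [sigma, ← ha, ← hB, div_sub_one hB_pos.ne', abs_div, abs_of_pos hB_pos,
      div_le_iff₀ hB_pos, abs_le]
    constructor <;> nlinarith [mul_nonneg (mul_nonneg (by linarith : (0:ℝ) ≤ 2 + p) ha0)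
      (by linarith : 0 ≤ 2 * B - 1)]
  have hG := abs_arcsinPrimitive_sub_one_le (hDelta.trans (by linarith))
  calc |arcsinPrimitive (delta p u) * sigma p u - 1|
      = |(arcsinPrimitive (delta p u) - 1) * sigma p u + (sigma p u - 1)| := by ring_nf
    _ ≤ 3 * delta p u ^ 2 * 2 + 2 * (2 + p) * a := by
        grw [abs_add_le, abs_mul, hG, hSigma, hSigma1]
    _ ≤ (24 * (1 + p) ^ 2 + 2 * (2 + p)) * a := by nlinarith

lemma denom_pos (hp : 0 < p) (hu0 : 0 < u) (hu1 : u < 1) : 0 < denom p u := by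
  have := rpow_mul_one_add_lt_one hp hu0 hu1
  rw [denom]; linarith

lemma numer_nonpos (hp : 0 ≤ p) (hu0 : 0 < u) : numer p u ≤ 0 := by
  rw [numer]; linarith [mul_one_sub_rpow_le hp hu0]

lemma neg_le_numer (hp : 0 < p) (hu0 : 0 < u) (hu1 : u < 1) :
    -(p * (1 + p) * (1 - u) ^ 2) ≤ numer p u := by
  have hlow := mul_one_sub_rpow_le hp.le hu0
  have hD := denom_pos hp hu0 hu1
  rw [denom] at hD
  rw [numer]
  nlinarith [mul_le_mul_of_nonneg_left hlow (mul_nonneg hp.le (sub_nonneg.2 hu1.le))]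

lemma denom_le (hp : 0 ≤ p) (hu0 : 0 < u) (hu1 : u ≤ 1) :
    denom p u ≤ p * (1 + p) * (1 - u) ^ 2 / u := by
  have hlow := mul_one_sub_rpow_le hp hu0
  rw [denom, le_div_iff₀ hu0]
  nlinarith [mul_le_mul_of_nonneg_left hlow (mul_nonneg hp (sub_nonneg.2 hu1))]

lemma le_one_sub_rpow (hp : 0 < p) (hu0 : 0 < u) (hu1 : u < 1) (hpu : p * (1 - u) ≤ u / 2) :
    p * (1 - u) / 2 ≤ 1 - u ^ p := by
  have ha : 1 / 2 ≤ u ^ p := by nlinarith [mul_one_sub_rpow_le hp.le hu0]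
  have hD := denom_pos hp hu0 hu1
  rw [denom] at hD
  nlinarith [mul_le_mul_of_nonneg_left ha (mul_nonneg hp.le (sub_nonneg.2 hu1.le))]

lemma abs_arcsinPrimitive_delta_mul_sigma_le (hp : 0 < p) (hu0 : 1 / 2 ≤ u) (hu1 : u < 1)
    (hpu : p * (1 - u) ≤ 1 / 4) :
    |arcsinPrimitive (delta p u) * sigma p u| ≤ 8 * (1 + p) / √(p / 2) * √(1 - u) := by
  have hu : 0 < u := by linarith
  have hε : 0 < 1 - u := by linarith
  have hD0 := denom_pos hp hu hu1
  have hD : denom p u ≤ 2 * (p * (1 + p) * (1 - u) ^ 2) :=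
    (denom_le hp.le hu hu1.le).trans <| by
      rw [div_le_iff₀ hu]; nlinarith [show 0 ≤ p * (1 + p) * (1 - u) ^ 2 by positivity]
  have hN : |numer p u| ≤ p * (1 + p) * (1 - u) ^ 2 :=
    abs_le.2 ⟨neg_le_numer hp hu hu1, (numer_nonpos hp.le hu).trans (by positivity)⟩
  have hs : |u ^ (p / 2)| ≤ 1 := by
    rw [abs_of_nonneg (rpow_nonneg hu.le _)]; exact rpow_le_one hu.le hu1.le (by positivity)
  have hA : p * (1 - u) / 2 ≤ 1 - u ^ p := le_one_sub_rpow hp hu hu1 (by linarith)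
  have hA0 : 0 < p * (1 - u) / 2 := by positivity
  have hA0' : 0 ≤ 1 - u ^ p := hA0.le.trans hA
  have hB : p * (1 - u) / 2 * √(p * (1 - u) / 2) ≤ (1 - u ^ p) ^ (3 / 2 : ℝ) := by
    rw [rpow_three_halves hA0']; gcongr
  have hB0 : 0 < (1 - u ^ p) ^ (3 / 2 : ℝ) := lt_of_lt_of_le (by positivity) hB
  have hprod : delta p u * sigma p u = u ^ (p / 2) * numer p u / (1 - u ^ p) ^ (3 / 2 : ℝ) := by
    rw [delta, sigma]; field_simp
  calc |arcsinPrimitive (delta p u) * sigma p u|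
      ≤ |sigma p u| + 2 * |delta p u * sigma p u| := abs_arcsinPrimitive_mul_le _ _
    _ ≤ (denom p u + 2 * |numer p u|) / (1 - u ^ p) ^ (3 / 2 : ℝ) := by
        rw [hprod, sigma, abs_div, abs_div, abs_of_pos hB0, abs_of_pos hD0, abs_mul,
          ← mul_div_assoc, ← add_div]
        gcongr
        exact mul_le_of_le_one_left (abs_nonneg _) hs
    _ ≤ 4 * (p * (1 + p) * (1 - u) ^ 2) / (p * (1 - u) / 2 * √(p * (1 - u) / 2)) := by
        gcongr; linarith
    _ = 8 * (1 + p) / √(p / 2) * √(1 - u) := by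
        rw [mul_div_right_comm p, sqrt_mul (by positivity)]
        have := sq_sqrt hε.le
        field_simp
        nlinarith

lemma exists_abs_arcsinPrimitive_delta_mul_sigma_sub_one_le (hp : 0 < p) :
    ∃ C > 0, ∃ δ ∈ Ioo (0 : ℝ) 1, ∀ u ∈ Ioo 0 δ,
      |arcsinPrimitive (delta p u) * sigma p u - 1| ≤ C * u ^ p := by
  set c := 1 / (4 * (1 + p) ^ 2) with hc
  have hc0 : 0 < c := by positivity
  have hc1 : c < 1 := by rw [hc, div_lt_one (by positivity)]; nlinarith
  refine ⟨24 * (1 + p) ^ 2 + 2 * (2 + p), by positivity, c ^ p⁻¹,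
    ⟨by positivity, rpow_lt_one hc0.le hc1 (inv_pos.2 hp)⟩, fun u ⟨hu0, hu⟩ => ?_⟩
  have hu1 : u < 1 := hu.trans (rpow_lt_one hc0.le hc1 (inv_pos.2 hp))
  refine abs_arcsinPrimitive_delta_mul_sigma_sub_one_le hp.le hu0 hu1 ?_
  have := rpow_lt_rpow hu0.le hu hp
  rw [← rpow_mul hc0.le, inv_mul_cancel₀ hp.ne', rpow_one, hc, lt_div_iff₀ (by positivity)] at this
  linarith

lemma exists_abs_arcsinPrimitive_delta_mul_sigma_le (hp : 0 < p) :
    ∃ C > 0, ∃ η ∈ Ioo (0 : ℝ) 1, ∀ u ∈ Ioo (1 - η) 1,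
      |arcsinPrimitive (delta p u) * sigma p u| ≤ C * √(1 - u) := by
  refine ⟨8 * (1 + p) / √(p / 2), by positivity, min (1 / 2) (1 / (4 * p)),
    ⟨by positivity, (min_le_left _ _).trans_lt (by norm_num)⟩, fun u ⟨hu0, hu1⟩ => ?_⟩
  refine abs_arcsinPrimitive_delta_mul_sigma_le hp (by linarith [min_le_left (1 / 2) (1 / (4 * p))])
    hu1 ?_
  have : 1 - u ≤ 1 / (4 * p) := by linarith [min_le_right (1 / 2) (1 / (4 * p))]
  rw [le_div_iff₀ (by positivity)] at this
  linarith

end ArcsinCorrelation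

open ArcsinCorrelation in
theorem stmt_15 (τ : ℝ) (hτ : τ > -1/2)
    (Δ Sg f : ℝ → ℝ)
    (hΔ : ∀ u ∈ Set.Ioo (0:ℝ) 1, Δ u =
      u^(τ+1/2) * (u*(1 - u^(2*τ+1)) - (2*τ+1)*(1-u)) /
        (1 - u^(2*τ+1) - (2*τ+1)*u^(2*τ+1)*(1-u)))
    (hSg : ∀ u ∈ Set.Ioo (0:ℝ) 1, Sg u =
      (1 - u^(2*τ+1) - (2*τ+1)*(1-u)*u^(2*τ+1)) / (1 - u^(2*τ+1))^((3:ℝ)/2))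
    (hf : ∀ u ∈ Set.Ioo (0:ℝ) 1, f u =
      (Real.sqrt (1 - (Δ u)^2) + Δ u * Real.arcsin (Δ u)) * Sg u - 1) :
    ∃ C > 0, ∃ u₀ ∈ Set.Ioo (0:ℝ) 1,
      (∀ u ∈ Set.Ioo (0:ℝ) u₀, |f u| ≤ C * u^(2*τ+1)) ∧
      (∀ u ∈ Set.Ioo (1-u₀) 1, |f u + 1| ≤ C * Real.sqrt (1-u)) := by
  have hp : 0 < 2 * τ + 1 := by linarith
  have hf' : ∀ u ∈ Ioo (0 : ℝ) 1,
      f u = arcsinPrimitive (delta (2 * τ + 1) u) * sigma (2 * τ + 1) u - 1 := by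
    intro u hu
    rw [hf u hu, hΔ u hu, hSg u hu, arcsinPrimitive, delta, sigma, numer, denom,
      show τ + 1 / 2 = (2 * τ + 1) / 2 by ring]
    ring_nf
  obtain ⟨C₀, hC₀, δ, ⟨hδ0, hδ1⟩, h₀⟩ := exists_abs_arcsinPrimitive_delta_mul_sigma_sub_one_le hp
  obtain ⟨C₁, hC₁, η, ⟨hη0, hη1⟩, h₁⟩ := exists_abs_arcsinPrimitive_delta_mul_sigma_le hp
  refine ⟨max C₀ C₁, lt_max_of_lt_left hC₀, min δ η, ⟨lt_min hδ0 hη0, min_lt_of_left_lt hδ1⟩,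
    fun u ⟨hu0, hu⟩ => ?_, fun u ⟨hu, hu1⟩ => ?_⟩
  · rw [hf' u ⟨hu0, hu.trans (min_lt_of_left_lt hδ1)⟩]
    grw [h₀ u ⟨hu0, hu.trans_le (min_le_left _ _)⟩, le_max_left C₀ C₁]
  · rw [hf' u ⟨by linarith [min_le_right δ η], hu1⟩, sub_add_cancel]
    grw [h₁ u ⟨by linarith [min_le_right δ η], hu1⟩, le_max_right C₀ C₁]
end

section
/- Let τ be a fixed real number and define c_j = j^τ·(1 + (−1)^j/log j) for j ≥ 2. Then |c_j|/j^τ → 1 as j → ∞; however, for all sufficiently large n, there exists j with n − n·e^{−(log n)^{1/5}} ≤ j ≤ n − e^{(log n)^{1/5}} and n − j odd such that | |c_j|/|c_n| − 1 | ≥ (1/2)·e^{−log log n}. In particular the sequence (c_j) satisfies the polynomial asymptotics condition |c_j| = j^τ(1+o_j(1)) but not the concentration condition |c_j|/|c_n| − 1 = O(e^{−(log log n)^{1+ε}}) uniformly over that range of j, for any ε > 0. -/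
/-!
Writing `c j = j ^ τ * (1 + (-1) ^ j / log j)`, the first claim is immediate. For the second,
take `j = n - d` with `d` the odd integer just above `E = exp ((log n) ^ (1/5))`. Since `E` is
`n ^ o(1)`, the power ratio `j ^ τ / n ^ τ` is within `1 / (4 log n)` of `1`, while, `n - j` being
odd, the sign factors `|1 ± 1 / log j| / |1 ∓ 1 / log n|` differ from `1` by at least `1 / log n`.
Hence `|c j| / |c n|` differs from `1` by at least `1 / (2 log n) = exp (-log (log n)) / 2`, which
is too large to be `O(exp (-(log (log n)) ^ (1 + ε)))`.
-/

open Real Filter Topology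

lemma tendsto_abs_one_add_neg_one_pow_div_log :
    Tendsto (fun j : ℕ => |1 + (-1 : ℝ) ^ j / log j|) atTop (𝓝 1) := by
  have hlog : Tendsto (fun j : ℕ => (log j)⁻¹) atTop (𝓝 0) :=
    (tendsto_log_atTop.comp tendsto_natCast_atTop_atTop).inv_tendsto_atTop
  have hosc : Tendsto (fun j : ℕ => (-1 : ℝ) ^ j / log j) atTop (𝓝 0) := by
    refine squeeze_zero_norm (fun j => ?_) hlog
    simp [abs_of_nonneg (log_natCast_nonneg j)]
  simpa using (hosc.const_add 1).abs

lemma abs_rpow_div_rpow_sub_one_le {a b τ : ℝ} (ha : 0 < a) (hab : a ≤ b)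
    (h : |τ| * ((b - a) / a) ≤ 1) : |a ^ τ / b ^ τ - 1| ≤ 2 * (|τ| * ((b - a) / a)) := by
  have hb : 0 < b := ha.trans_le hab
  have hlog : |log (a / b)| ≤ (b - a) / a := by
    rw [← inv_div, log_inv, abs_neg, abs_of_nonneg (log_nonneg ((one_le_div ha).2 hab))]
    exact (log_le_sub_one_of_pos (by positivity)).trans_eq (by field_simp)
  have hx : |log (a / b) * τ| ≤ |τ| * ((b - a) / a) := by
    rw [abs_mul, mul_comm]; exact mul_le_mul_of_nonneg_left hlog (abs_nonneg τ)
  rw [← div_rpow ha.le hb.le, rpow_def_of_pos (div_pos ha hb)]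
  exact (abs_exp_sub_one_le (hx.trans h)).trans (by linarith)

lemma le_abs_abs_div_abs_sub_one {x y : ℝ} (hy : 0 ≤ y) (hyx : y ≤ x) (hx : x < 1) (k : ℕ) :
    y ≤ |(|1 + (-1) ^ k * x| / |1 - (-1) ^ k * y|) - 1| := by
  rcases Nat.even_or_odd k with hk | hk
  · rw [hk.neg_one_pow, one_mul, one_mul, abs_of_pos (by linarith : 0 < 1 + x),
      abs_of_pos (by linarith : 0 < 1 - y)]
    have : 1 + y ≤ (1 + x) / (1 - y) := by
      rw [le_div_iff₀ (by linarith)]; nlinarith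
    exact le_abs.2 (Or.inl (by linarith))
  · rw [hk.neg_one_pow, neg_one_mul, neg_one_mul, sub_neg_eq_add, ← sub_eq_add_neg,
      abs_of_pos (by linarith : 0 < 1 - x), abs_of_pos (by linarith : 0 < 1 + y)]
    have : (1 - x) / (1 + y) ≤ 1 - y := by
      rw [div_le_iff₀ (by linarith)]; nlinarith
    exact le_abs.2 (Or.inr (by linarith))

lemma half_le_abs_mul_sub_one {ρ s y : ℝ} (hy : y ≤ 1) (hρ : |ρ - 1| ≤ y / 4) (hs : 0 ≤ s)
    (hsy : y ≤ |s - 1|) : y / 2 ≤ |ρ * s - 1| := by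
  rw [abs_le] at hρ
  rcases le_abs'.1 hsy with h | h
  · nlinarith [neg_abs_le (ρ * s - 1)]
  · nlinarith [le_abs_self (ρ * s - 1)]

lemma eventually_mul_exp_rpow_sq_mul_le_exp (K : ℝ) :
    ∀ᶠ x : ℝ in atTop, K * exp (x ^ (1 / 5 : ℝ)) ^ 2 * x ≤ exp x := by
  filter_upwards [eventually_ge_atTop 0,
    (tendsto_rpow_atTop (by norm_num : (0 : ℝ) < 4 / 5)).eventually_ge_atTop 8,
    eventually_ge_atTop (2 * log (4 * |K| + 1))] with x hx hx45 hxK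
  have hsplit : x = x ^ (1 / 5 : ℝ) * x ^ (4 / 5 : ℝ) := by
    rw [← rpow_add' hx (by norm_num)]; norm_num
  have hroot : 2 * x ^ (1 / 5 : ℝ) ≤ x / 4 := by
    nlinarith [rpow_nonneg hx (1 / 5 : ℝ)]
  have hlin : x ≤ 4 * exp (x / 4) := by linarith [add_one_le_exp (x / 4)]
  have hK : 4 * |K| + 1 ≤ exp (x / 2) := by
    rw [← exp_log (by positivity : 0 < 4 * |K| + 1)]; exact exp_le_exp.2 (by linarith)
  calc K * exp (x ^ (1 / 5 : ℝ)) ^ 2 * x ≤ |K| * exp (x / 4) * (4 * exp (x / 4)) := by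
        rw [← exp_nat_mul]
        gcongr
        · exact le_abs_self K
        · push_cast; linarith
    _ = 4 * |K| * exp (x / 2) := by rw [mul_mul_mul_comm, ← exp_add]; ring_nf
    _ ≤ exp (x / 2) * exp (x / 2) := by gcongr; linarith
    _ = exp x := by rw [← exp_add]; ring_nf

lemma exists_odd_natCast_mem_Icc {E : ℝ} (hE : 0 ≤ E) :
    ∃ d : ℕ, Odd d ∧ E ≤ d ∧ (d : ℝ) ≤ E + 2 := by
  have hceil := Nat.ceil_lt_add_one hE
  rcases Nat.even_or_odd ⌈E⌉₊ with h | h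
  · exact ⟨⌈E⌉₊ + 1, h.add_one, by push_cast; linarith [Nat.le_ceil E], by push_cast; linarith⟩
  · exact ⟨⌈E⌉₊, h, Nat.le_ceil E, by linarith⟩

lemma tendsto_rpow_one_add_sub_self {ε : ℝ} (hε : 0 < ε) :
    Tendsto (fun t : ℝ => t ^ (1 + ε) - t) atTop atTop := by
  have h := tendsto_id.atTop_mul_atTop₀
    (tendsto_atTop_add_const_right atTop (-1) (tendsto_rpow_atTop hε))
  refine h.congr' ?_
  filter_upwards [eventually_gt_atTop 0] with t ht
  rw [rpow_add ht, rpow_one, id]; ring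

lemma eventually_mul_exp_neg_rpow_lt {ε : ℝ} (hε : 0 < ε) (C : ℝ) {a : ℝ} (ha : 0 < a) :
    ∀ᶠ t : ℝ in atTop, C * exp (-t ^ (1 + ε)) < a * exp (-t) := by
  have h : Tendsto (fun t : ℝ => C * exp (-(t ^ (1 + ε) - t))) atTop (𝓝 0) := by
    simpa using (tendsto_exp_neg_atTop_nhds_zero.comp (tendsto_rpow_one_add_sub_self hε)).const_mul C
  filter_upwards [h.eventually (gt_mem_nhds ha)] with t ht
  calc C * exp (-t ^ (1 + ε)) = C * exp (-(t ^ (1 + ε) - t)) * exp (-t) := by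
        rw [mul_assoc, ← exp_add]; ring_nf
    _ < a * exp (-t) := mul_lt_mul_of_pos_right ht (exp_pos _)

section Sequence

variable {τ : ℝ} {c : ℕ → ℝ} (hc : ∀ j : ℕ, 2 ≤ j → c j = (j : ℝ) ^ τ * (1 + (-1 : ℝ) ^ j / log j))
include hc

lemma abs_eq_rpow_mul_abs {j : ℕ} (hj : 2 ≤ j) :
    |c j| = (j : ℝ) ^ τ * |1 + (-1 : ℝ) ^ j * (1 / log j)| := by
  rw [hc j hj, abs_mul, abs_of_pos (rpow_pos_of_pos (by positivity) τ), mul_one_div]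

lemma one_div_log_div_two_le_abs_div_abs_sub_one {j n : ℕ} (hjn : j ≤ n) (hodd : Odd (n - j))
    (hj : 1 < log j) (hρ : |(j : ℝ) ^ τ / (n : ℝ) ^ τ - 1| ≤ 1 / log n / 4) :
    1 / log n / 2 ≤ |(|c j| / |c n|) - 1| := by
  have hj2 : 2 ≤ j := by
    by_contra! h
    interval_cases j <;> norm_num at hj
  have hjpos : (0 : ℝ) < j := by positivity
  have hML : log j ≤ log n := log_le_log hjpos (by exact_mod_cast hjn)
  have hsign : (-1 : ℝ) ^ n = -(-1) ^ j := by
    rw [← Nat.add_sub_cancel' hjn, pow_add, hodd.neg_one_pow, mul_neg_one]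
  rw [abs_eq_rpow_mul_abs hc hj2, abs_eq_rpow_mul_abs hc (hj2.trans hjn), hsign, neg_mul,
    ← sub_eq_add_neg, mul_div_mul_comm]
  refine half_le_abs_mul_sub_one ?_ hρ (by positivity)
    (le_abs_abs_div_abs_sub_one (by positivity) ?_ ?_ j)
  · rw [div_le_one (by linarith)]; linarith
  · exact one_div_le_one_div_of_le (by linarith) hML
  · rw [div_lt_one (by linarith)]; exact hj

lemma one_div_log_div_two_le_abs_div_abs_sub_one_of_odd {n d : ℕ} (hodd : Odd d)
    (hL : 2 ≤ log n) (hdn : 2 * d ≤ n) (hdτ : 16 * |τ| * d * log n ≤ n) :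
    1 / log n / 2 ≤ |(|c (n - d)| / |c n|) - 1| := by
  have hn : (0 : ℝ) < n := Nat.cast_pos.2 (Nat.pos_of_ne_zero (by rintro rfl; norm_num at hL))
  have hdn' : 2 * (d : ℝ) ≤ n := by exact_mod_cast hdn
  have hhalf : (n : ℝ) / 2 ≤ n - d := by linarith
  have hj : ((n - d : ℕ) : ℝ) = n - d := Nat.cast_sub (by omega)
  refine one_div_log_div_two_le_abs_div_abs_sub_one hc (Nat.sub_le n d)
    (by rwa [Nat.sub_sub_self (by omega)]) ?_ ?_ <;> rw [hj]
  · calc 1 < log n - log 2 := by linarith [log_two_lt_d9]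
      _ = log (n / 2) := by rw [log_div hn.ne' two_ne_zero]
      _ ≤ log (n - d) := log_le_log (by positivity) hhalf
  · have hgap : |τ| * ((n - (n - d)) / (n - d)) ≤ 1 / log n / 8 := by
      rw [sub_sub_cancel, mul_div_assoc', div_div, div_le_div_iff₀ (by linarith) (by positivity)]
      linarith
    have hL8 : 1 / log n / 8 ≤ 1 := by
      rw [div_div, div_le_one (by positivity)]; linarith
    calc |(n - d : ℝ) ^ τ / (n : ℝ) ^ τ - 1| ≤ 2 * (|τ| * ((n - (n - d)) / (n - d))) :=
          abs_rpow_div_rpow_sub_one_le (by linarith) (by linarith) (hgap.trans hL8)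
      _ ≤ 1 / log n / 4 := by linarith

lemma eventually_exists_odd_sub_half_exp_le :
    ∀ᶠ n : ℕ in atTop, ∃ j : ℕ,
      (n : ℝ) - n * exp (-(log n) ^ ((1 : ℝ) / 5)) ≤ j ∧
      (j : ℝ) ≤ n - exp ((log n) ^ ((1 : ℝ) / 5)) ∧
      Odd (n - j) ∧
      1 / 2 * exp (-log (log n)) ≤ |(|c j| / |c n|) - 1| := by
  have hlog := tendsto_log_atTop.comp tendsto_natCast_atTop_atTop
  -- `d ≤ 2 * E`, so this constant gives both `d * E ≤ n` and `16 * |τ| * d * log n ≤ n`.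
  filter_upwards [hlog.eventually (eventually_mul_exp_rpow_sq_mul_le_exp (32 * |τ| + 2)),
    hlog.eventually_ge_atTop 2] with n hsize hL
  simp only [Function.comp_apply] at hsize hL
  set L := log n
  set E := exp (L ^ ((1 : ℝ) / 5))
  have hn : (0 : ℝ) < n := Nat.cast_pos.2 (Nat.pos_of_ne_zero (by rintro rfl; norm_num [L] at hL))
  rw [exp_log hn] at hsize
  have hE : 2 ≤ E := by
    have : 1 ≤ L ^ ((1 : ℝ) / 5) := one_le_rpow (by linarith) (by norm_num)
    linarith [add_one_le_exp (1 : ℝ), exp_le_exp.2 this]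
  obtain ⟨d, hodd, hEd, hdE⟩ := exists_odd_natCast_mem_Icc (by linarith : 0 ≤ E)
  have hd : (d : ℝ) ≤ 2 * E := by linarith
  have hP : 0 ≤ E ^ 2 * L := by positivity
  have hτ : 0 ≤ 32 * |τ| * (E ^ 2 * L) := by positivity
  have hdE' : d * E ≤ n := by
    calc d * E ≤ 2 * E * E := by gcongr
      _ ≤ 2 * (E ^ 2 * L) := by nlinarith
      _ ≤ n := by linarith
  have hdτ : 16 * |τ| * d * L ≤ n := by
    calc 16 * |τ| * d * L ≤ 16 * |τ| * (2 * E) * L := by gcongr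
      _ = 32 * |τ| * (E * L) := by ring
      _ ≤ 32 * |τ| * (E ^ 2 * L) := by gcongr; nlinarith
      _ ≤ n := by linarith
  have hdn : 2 * d ≤ n := by exact_mod_cast (by nlinarith : (2 * d : ℝ) ≤ n)
  have hj : ((n - d : ℕ) : ℝ) = n - d := Nat.cast_sub (by omega)
  refine ⟨n - d, ?_, by rw [hj]; linarith, by rwa [Nat.sub_sub_self (by omega)], ?_⟩
  · rw [hj, exp_neg, ← div_eq_mul_inv, sub_le_sub_iff_left, le_div_iff₀ (by linarith)]
    exact hdE'
  rw [exp_neg, exp_log (by linarith), show 1 / 2 * L⁻¹ = 1 / L / 2 by ring]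
  exact one_div_log_div_two_le_abs_div_abs_sub_one_of_odd hc hodd hL hdn hdτ

end Sequence

theorem stmt_19 (τ : ℝ)
    (c : ℕ → ℝ)
    (hc : ∀ j : ℕ, 2 ≤ j → c j = (j:ℝ)^τ * (1 + (-1:ℝ)^j / Real.log j)) :
    Filter.Tendsto (fun j : ℕ => |c j| / (j:ℝ)^τ) Filter.atTop (nhds 1) ∧
    (∃ N : ℕ, ∀ n : ℕ, N ≤ n → ∃ j : ℕ,
      (n:ℝ) - (n:ℝ) * Real.exp (-(Real.log n)^((1:ℝ)/5)) ≤ (j:ℝ) ∧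
      (j:ℝ) ≤ (n:ℝ) - Real.exp ((Real.log n)^((1:ℝ)/5)) ∧
      Odd (n - j) ∧
      (1/2) * Real.exp (-Real.log (Real.log n)) ≤ abs (|c j| / |c n| - 1)) ∧
    (∀ ε : ℝ, 0 < ε → ¬ ∃ C : ℝ, ∃ N : ℕ, ∀ n : ℕ, N ≤ n → ∀ j : ℕ,
      ((n:ℝ) - (n:ℝ) * Real.exp (-(Real.log n)^((1:ℝ)/5)) ≤ (j:ℝ) ∧
       (j:ℝ) ≤ (n:ℝ) - Real.exp ((Real.log n)^((1:ℝ)/5))) →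
      abs (|c j| / |c n| - 1) ≤ C * Real.exp (-(Real.log (Real.log n))^(1+ε))) := by
  have hgap := eventually_exists_odd_sub_half_exp_le hc
  refine ⟨?_, eventually_atTop.mp hgap, ?_⟩
  · refine tendsto_abs_one_add_neg_one_pow_div_log.congr' ?_
    filter_upwards [eventually_ge_atTop 2] with j hj
    have hpos : (0 : ℝ) < (j : ℝ) ^ τ := rpow_pos_of_pos (by positivity) τ
    rw [hc j hj, abs_mul, abs_of_pos hpos, mul_div_cancel_left₀ _ hpos.ne']
  · rintro ε hε ⟨C, N, hC⟩
    have hloglog := (tendsto_log_atTop.comp tendsto_log_atTop).comp tendsto_natCast_atTop_atTop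
    obtain ⟨n, ⟨j, hlo, hhi, -, hlow⟩, hnN, hsmall⟩ := (hgap.and ((eventually_ge_atTop N).and
      (hloglog.eventually (eventually_mul_exp_neg_rpow_lt hε C one_half_pos)))).exists
    exact (hlow.trans (hC n hnN j ⟨hlo, hhi⟩)).not_gt hsmall
end
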